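/- Let n ≥ 1, let W ⊆ {(r,s) ∈ ℝ² : r > 0} be open, let P, Q : W → ℝ be smooth, and let Ω = {(x,y) ∈ ℝⁿ × ℝⁿ : y ≠ 0 and (‖x‖, ⟨x,y⟩/‖y‖) ∈ W}. For (x,y) ∈ Ω define G^k(x,y) = u P(r,s) y^k + u² Q(r,s) x^k, where r = ‖x‖, u = ‖y‖, s = ⟨x,y⟩/u. Then at every point of Ω and for each i = 1,…,n, ∂/∂y^i (Σ_{k=1}^{n} ∂G^k/∂y^k) = [(n+1)P_s + 2Q + (r² − s²)Q_ss]·x^i + (1/u)·[(n+1)(P − s P_s) + (r² − s²)(Q_s − s Q_ss)]·y^i. -/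

import Mathlib

open scoped RealInnerProductSpace ContDiff

/-- Partial derivative in the second variable `s` of a function on `ℝ × ℝ`. -/
noncomputable def pds (f : ℝ × ℝ → ℝ) (p : ℝ × ℝ) : ℝ := fderiv ℝ f p (0, 1)

/-- The geodesic spray coefficients `G^k = u P y^k + u² Q x^k` of a spherically
symmetric Finsler metric, with `r = ‖x‖`, `u = ‖y‖`, `s = ⟨x,y⟩/u`. -/
noncomputable def sprayG {n : ℕ} (P Q : ℝ × ℝ → ℝ)
    (x y : EuclideanSpace ℝ (Fin n)) (k : Fin n) : ℝ :=
  ‖y‖ * P (‖x‖, ⟪x, y⟫ / ‖y‖) * y k + ‖y‖ ^ 2 * Q (‖x‖, ⟪x, y⟫ / ‖y‖) * x k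

section aux

variable {n : ℕ}

lemma hasFDerivAt_norm' (y : EuclideanSpace ℝ (Fin n)) (hy : y ≠ 0) :
    HasFDerivAt (fun z : EuclideanSpace ℝ (Fin n) => ‖z‖) (‖y‖⁻¹ • innerSL ℝ y) y := by
  have hu : ‖y‖ ≠ 0 := norm_ne_zero_iff.mpr hy
  have h1 : HasFDerivAt (fun z : EuclideanSpace ℝ (Fin n) => ‖z‖ ^ 2)
      (2 • innerSL ℝ y) y := (hasStrictFDerivAt_norm_sq y).hasFDerivAt
  have h2 : HasDerivAt Real.sqrt (1 / (2 * Real.sqrt (‖y‖ ^ 2))) (‖y‖ ^ 2) :=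
    Real.hasDerivAt_sqrt (pow_ne_zero 2 hu)
  have h3 := h2.comp_hasFDerivAt y h1
  have hfun : (Real.sqrt ∘ fun z : EuclideanSpace ℝ (Fin n) => ‖z‖ ^ 2)
      = fun z => ‖z‖ := by
    funext z; simp [Function.comp, Real.sqrt_sq (norm_nonneg z)]
  rw [hfun] at h3
  refine h3.congr_fderiv ?_
  rw [Real.sqrt_sq (norm_nonneg y)]
  ext h
  simp only [ContinuousLinearMap.smul_apply, ContinuousLinearMap.coe_smul', Pi.smul_apply,
    smul_eq_mul]
  field_simp
  ring

lemma hasFDerivAt_norm_inv (y : EuclideanSpace ℝ (Fin n)) (hy : y ≠ 0) :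
    HasFDerivAt (fun z : EuclideanSpace ℝ (Fin n) => ‖z‖⁻¹)
      ((-(‖y‖ ^ 2)⁻¹) • (‖y‖⁻¹ • innerSL ℝ y)) y := by
  have hu : ‖y‖ ≠ 0 := norm_ne_zero_iff.mpr hy
  exact (hasDerivAt_inv hu).comp_hasFDerivAt y (hasFDerivAt_norm' y hy)

/-- The derivative of `z ↦ ⟪x,z⟫/‖z‖`. -/
noncomputable def Smap (x y : EuclideanSpace ℝ (Fin n)) :
    EuclideanSpace ℝ (Fin n) →L[ℝ] ℝ :=
  ‖y‖⁻¹ • innerSL ℝ x - (⟪x, y⟫ / ‖y‖ ^ 3) • innerSL ℝ y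

lemma hasFDerivAt_smap (x y : EuclideanSpace ℝ (Fin n)) (hy : y ≠ 0) :
    HasFDerivAt (fun z : EuclideanSpace ℝ (Fin n) => ⟪x, z⟫ / ‖z‖) (Smap x y) y := by
  have hu : ‖y‖ ≠ 0 := norm_ne_zero_iff.mpr hy
  have h1 := ((innerSL ℝ x).hasFDerivAt (x := y)).mul (hasFDerivAt_norm_inv y hy)
  have hfun : (fun z : EuclideanSpace ℝ (Fin n) => ⟪x, z⟫ / ‖z‖)
      = fun z => (innerSL ℝ x) z * ‖z‖⁻¹ := by
    funext z; simp [div_eq_mul_inv]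
  rw [hfun]
  refine h1.congr_fderiv ?_
  refine ContinuousLinearMap.ext fun h => ?_
  simp only [Smap, ContinuousLinearMap.sub_apply, ContinuousLinearMap.smul_apply,
    smul_eq_mul, ContinuousLinearMap.add_apply, innerSL_apply_apply, neg_mul, neg_smul,
    ContinuousLinearMap.neg_apply]
  field_simp
  ring

lemma key_hasFDerivAt (x y : EuclideanSpace ℝ (Fin n)) (hy : y ≠ 0) (f : ℝ × ℝ → ℝ)
    (hf : DifferentiableAt ℝ f (‖x‖, ⟪x, y⟫ / ‖y‖)) :
    HasFDerivAt (fun z : EuclideanSpace ℝ (Fin n) => f (‖x‖, ⟪x, z⟫ / ‖z‖))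
      (pds f (‖x‖, ⟪x, y⟫ / ‖y‖) • Smap x y) y := by
  have h1 : HasFDerivAt (fun z : EuclideanSpace ℝ (Fin n) => ((‖x‖ : ℝ), ⟪x, z⟫ / ‖z‖))
      ((0 : EuclideanSpace ℝ (Fin n) →L[ℝ] ℝ).prod (Smap x y)) y :=
    HasFDerivAt.prodMk (hasFDerivAt_const _ _) (hasFDerivAt_smap x y hy)
  have h2 := hf.hasFDerivAt.comp y h1
  refine h2.congr_fderiv ?_
  refine ContinuousLinearMap.ext fun h => ?_
  simp only [ContinuousLinearMap.smul_apply, smul_eq_mul, ContinuousLinearMap.coe_comp',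
    Function.comp_apply, ContinuousLinearMap.prod_apply, ContinuousLinearMap.zero_apply]
  have h3 : ((0 : ℝ), Smap x y h) = (Smap x y h) • ((0 : ℝ), (1 : ℝ)) := by simp
  rw [h3, map_smul, smul_eq_mul, pds]
  ring

lemma Smap_apply_single (x y : EuclideanSpace ℝ (Fin n)) (k : Fin n) :
    Smap x y (EuclideanSpace.single k 1) = ‖y‖⁻¹ * x k - (⟪x, y⟫ / ‖y‖ ^ 3) * y k := by
  simp [Smap, EuclideanSpace.inner_single_right]

lemma innerSL_apply_single (y : EuclideanSpace ℝ (Fin n)) (k : Fin n) :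
    innerSL ℝ y (EuclideanSpace.single k 1) = y k := by
  simp [EuclideanSpace.inner_single_right]

lemma proj_apply_single (k : Fin n) :
    (EuclideanSpace.proj (𝕜 := ℝ) k) (EuclideanSpace.single k 1 :
      EuclideanSpace ℝ (Fin n)) = 1 := by
  show (EuclideanSpace.single k (1 : ℝ) : EuclideanSpace ℝ (Fin n)) k = 1
  simp [EuclideanSpace.single_apply]

lemma inner_eq_sum (x y : EuclideanSpace ℝ (Fin n)) :
    ⟪x, y⟫ = ∑ k, x k * y k := by
  simp [PiLp.inner_apply, RCLike.inner_apply, conj_trivial]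
  exact Finset.sum_congr rfl fun _ _ => mul_comm _ _

lemma normsq_eq_sum (x : EuclideanSpace ℝ (Fin n)) :
    ‖x‖ ^ 2 = ∑ k, x k * x k := by
  rw [← real_inner_self_eq_norm_sq, inner_eq_sum]

lemma divergenceG (P Q : ℝ × ℝ → ℝ) (x y1 : EuclideanSpace ℝ (Fin n)) (hy1 : y1 ≠ 0)
    (hPd : DifferentiableAt ℝ P (‖x‖, ⟪x, y1⟫ / ‖y1‖))
    (hQd : DifferentiableAt ℝ Q (‖x‖, ⟪x, y1⟫ / ‖y1‖)) :
    ∑ k, fderiv ℝ (fun y2 => sprayG P Q x y2 k) y1 (EuclideanSpace.single k 1) =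
      (n + 1) * ‖y1‖ * P (‖x‖, ⟪x, y1⟫ / ‖y1‖) + 2 * ⟪x, y1⟫ * Q (‖x‖, ⟪x, y1⟫ / ‖y1‖)
        + ‖y1‖ * (‖x‖ ^ 2 - (⟪x, y1⟫ / ‖y1‖) ^ 2) * pds Q (‖x‖, ⟪x, y1⟫ / ‖y1‖) := by
  have hu : ‖y1‖ ≠ 0 := norm_ne_zero_iff.mpr hy1
  set p : ℝ × ℝ := (‖x‖, ⟪x, y1⟫ / ‖y1‖) with hp
  have hterm : ∀ k : Fin n,
      fderiv ℝ (fun y2 => sprayG P Q x y2 k) y1 (EuclideanSpace.single k 1) =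
        ‖y1‖ * P p + y1 k * (‖y1‖ * pds P p * (‖y1‖⁻¹ * x k - (⟪x, y1⟫ / ‖y1‖ ^ 3) * y1 k)
            + P p * (‖y1‖⁻¹ * y1 k))
          + x k * (‖y1‖ ^ 2 * pds Q p * (‖y1‖⁻¹ * x k - (⟪x, y1⟫ / ‖y1‖ ^ 3) * y1 k)
            + Q p * (2 * y1 k)) := by
    intro k
    have hproj : HasFDerivAt (fun z : EuclideanSpace ℝ (Fin n) => z k)
        (EuclideanSpace.proj (𝕜 := ℝ) k) y1 := (EuclideanSpace.proj (𝕜 := ℝ) k).hasFDerivAt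
    have hG := (((hasFDerivAt_norm' y1 hy1).mul (key_hasFDerivAt x y1 hy1 P hPd)).mul
        hproj).add ((((hasStrictFDerivAt_norm_sq y1).hasFDerivAt).mul
        (key_hasFDerivAt x y1 hy1 Q hQd)).mul_const (x k))
    have hGf : (fun y2 : EuclideanSpace ℝ (Fin n) => sprayG P Q x y2 k) =
        fun z => (‖z‖ * P (‖x‖, ⟪x, z⟫ / ‖z‖)) * z k
          + (‖z‖ ^ 2 * Q (‖x‖, ⟪x, z⟫ / ‖z‖)) * x k := by
      funext z; simp [sprayG, mul_assoc]
    have hG' : HasFDerivAt (𝕜 := ℝ) (fun y2 : EuclideanSpace ℝ (Fin n) => sprayG P Q x y2 k) _ y1 := hG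
    rw [hG'.fderiv]
    simp only [ContinuousLinearMap.add_apply, ContinuousLinearMap.smul_apply, smul_eq_mul,
      ContinuousLinearMap.coe_smul', Pi.smul_apply, innerSL_apply_single,
      proj_apply_single, Smap_apply_single, nsmul_eq_mul, Nat.cast_ofNat, Pi.mul_apply]
    rw [← hp]
    ring
  rw [Finset.sum_congr rfl fun k _ => hterm k]
  have hexp : ∀ k : Fin n,
      ‖y1‖ * P p + y1 k * (‖y1‖ * pds P p * (‖y1‖⁻¹ * x k - (⟪x, y1⟫ / ‖y1‖ ^ 3) * y1 k)
            + P p * (‖y1‖⁻¹ * y1 k))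
          + x k * (‖y1‖ ^ 2 * pds Q p * (‖y1‖⁻¹ * x k - (⟪x, y1⟫ / ‖y1‖ ^ 3) * y1 k)
            + Q p * (2 * y1 k)) =
        (‖y1‖ * pds P p * ‖y1‖⁻¹ - ‖y1‖ ^ 2 * pds Q p * (⟪x, y1⟫ / ‖y1‖ ^ 3)
            + 2 * Q p) * (x k * y1 k)
          + (P p * ‖y1‖⁻¹ - ‖y1‖ * pds P p * (⟪x, y1⟫ / ‖y1‖ ^ 3)) * (y1 k * y1 k)
          + (‖y1‖ ^ 2 * pds Q p * ‖y1‖⁻¹) * (x k * x k) + ‖y1‖ * P p := by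
    intro k; ring
  rw [Finset.sum_congr rfl fun k _ => hexp k]
  simp only [Finset.sum_add_distrib, ← Finset.mul_sum, Finset.sum_const, Finset.card_univ,
    Fintype.card_fin, nsmul_eq_mul]
  rw [← inner_eq_sum, ← normsq_eq_sum, ← normsq_eq_sum]
  field_simp
  ring

end aux

/-- at every point of `Ω` and for each `i`,
`∂/∂y^i (Σ_k ∂G^k/∂y^k) = ((n+1)P_s + 2Q + (r²−s²)Q_ss) x^i
 + (1/u)((n+1)(P − s P_s) + (r²−s²)(Q_s − s Q_ss)) y^i`. -/
theorem pderiv_sum_pderiv_sprayG {n : ℕ} (hn : 1 ≤ n)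
    (W : Set (ℝ × ℝ)) (hWopen : IsOpen W) (hWsub : W ⊆ {p : ℝ × ℝ | 0 < p.1})
    (P Q : ℝ × ℝ → ℝ) (hP : ContDiffOn ℝ (⊤ : ℕ∞) P W) (hQ : ContDiffOn ℝ (⊤ : ℕ∞) Q W)
    (x y : EuclideanSpace ℝ (Fin n)) (hy : y ≠ 0)
    (hmem : (‖x‖, ⟪x, y⟫ / ‖y‖) ∈ W) (i : Fin n) :
    fderiv ℝ
        (fun y1 => ∑ k, fderiv ℝ (fun y2 => sprayG P Q x y2 k) y1
          (EuclideanSpace.single k 1)) y (EuclideanSpace.single i 1) =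
      ((n + 1) * pds P (‖x‖, ⟪x, y⟫ / ‖y‖) + 2 * Q (‖x‖, ⟪x, y⟫ / ‖y‖)
          + (‖x‖ ^ 2 - (⟪x, y⟫ / ‖y‖) ^ 2) * pds (pds Q) (‖x‖, ⟪x, y⟫ / ‖y‖)) * x i
        + (1 / ‖y‖) *
          ((n + 1) * (P (‖x‖, ⟪x, y⟫ / ‖y‖)
              - (⟪x, y⟫ / ‖y‖) * pds P (‖x‖, ⟪x, y⟫ / ‖y‖))
            + (‖x‖ ^ 2 - (⟪x, y⟫ / ‖y‖) ^ 2) *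
              (pds Q (‖x‖, ⟪x, y⟫ / ‖y‖)
                - (⟪x, y⟫ / ‖y‖) * pds (pds Q) (‖x‖, ⟪x, y⟫ / ‖y‖))) * y i := by
  have hu : ‖y‖ ≠ 0 := norm_ne_zero_iff.mpr hy
  -- smoothness bookkeeping
  have hP' : ContDiffOn ℝ (∞ : WithTop ℕ∞) P W := hP.of_le (by simp)
  have hQ' : ContDiffOn ℝ (∞ : WithTop ℕ∞) Q W := hQ.of_le (by simp)
  have hQs : ContDiffOn ℝ (∞ : WithTop ℕ∞) (pds Q) W := by
    have h1 : ContDiffOn ℝ (∞ : WithTop ℕ∞) (fderiv ℝ Q) W :=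
      ((contDiffOn_infty_iff_fderiv_of_isOpen hWopen).1 hQ').2
    exact h1.clm_apply contDiffOn_const
  have hdiffP : ∀ q ∈ W, DifferentiableAt ℝ P q := fun q hq =>
    ((hP'.contDiffAt (hWopen.mem_nhds hq)).differentiableAt (by norm_num))
  have hdiffQ : ∀ q ∈ W, DifferentiableAt ℝ Q q := fun q hq =>
    ((hQ'.contDiffAt (hWopen.mem_nhds hq)).differentiableAt (by norm_num))
  have hdiffQs : ∀ q ∈ W, DifferentiableAt ℝ (pds Q) q := fun q hq =>
    ((hQs.contDiffAt (hWopen.mem_nhds hq)).differentiableAt (by norm_num))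
  -- the divergence function, in a multiplication-friendly shape
  set F : EuclideanSpace ℝ (Fin n) → ℝ := fun z =>
    ((n : ℝ) + 1) * (‖z‖ * P (‖x‖, ⟪x, z⟫ / ‖z‖))
      + 2 * (innerSL ℝ x z * Q (‖x‖, ⟪x, z⟫ / ‖z‖))
      + ‖z‖ * ((‖x‖ ^ 2 - (⟪x, z⟫ / ‖z‖) * (⟪x, z⟫ / ‖z‖)) * pds Q (‖x‖, ⟪x, z⟫ / ‖z‖))
    with hF
  -- the set where the divergence formula holds is open
  have hopen : IsOpen {z : EuclideanSpace ℝ (Fin n) |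
      z ≠ 0 ∧ (‖x‖, ⟪x, z⟫ / ‖z‖) ∈ W} := by
    have hcont : ContinuousOn (fun z : EuclideanSpace ℝ (Fin n) =>
        ((‖x‖ : ℝ), ⟪x, z⟫ / ‖z‖)) {z | z ≠ 0} := by
      apply ContinuousOn.prodMk continuousOn_const
      exact ContinuousOn.div ((innerSL ℝ x).continuous.continuousOn)
        continuous_norm.continuousOn (fun z hz => norm_ne_zero_iff.mpr hz)
    have h0 : IsOpen {z : EuclideanSpace ℝ (Fin n) | z ≠ 0} := isOpen_compl_singleton
    exact hcont.isOpen_inter_preimage h0 hWopen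
  have hev : (fun y1 => ∑ k, fderiv ℝ (fun y2 => sprayG P Q x y2 k) y1
      (EuclideanSpace.single k 1)) =ᶠ[nhds y] F := by
    filter_upwards [hopen.mem_nhds ⟨hy, hmem⟩] with z hz
    rw [divergenceG P Q x z hz.1 (hdiffP _ hz.2) (hdiffQ _ hz.2), hF]
    simp only [innerSL_apply_apply]
    ring
  rw [hev.fderiv_eq]
  -- compute the derivative of F
  have hSd := hasFDerivAt_smap x y hy
  have hNd := hasFDerivAt_norm' y hy
  have hPd := key_hasFDerivAt x y hy P (hdiffP _ hmem)
  have hQd := key_hasFDerivAt x y hy Q (hdiffQ _ hmem)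
  have hQsd := key_hasFDerivAt x y hy (pds Q) (hdiffQs _ hmem)
  have hF1 := (hNd.mul hPd).const_mul ((n : ℝ) + 1)
  have hF2 := (((innerSL ℝ x).hasFDerivAt (x := y)).mul hQd).const_mul (2 : ℝ)
  have hsub := (hasFDerivAt_const (‖x‖ ^ 2) y).sub (hSd.mul hSd)
  have hF3 := hNd.mul (hsub.mul hQsd)
  have hFd := (hF1.add hF2).add hF3
  have hFd' : HasFDerivAt F _ y := hFd
  rw [hFd'.fderiv]
  simp only [ContinuousLinearMap.add_apply, ContinuousLinearMap.smul_apply, smul_eq_mul,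
    ContinuousLinearMap.coe_smul', Pi.smul_apply, ContinuousLinearMap.sub_apply,
    ContinuousLinearMap.zero_apply, innerSL_apply_single, Smap_apply_single, innerSL_apply_apply,
    ContinuousLinearMap.coe_sub', Pi.sub_apply, Pi.mul_apply, Pi.pow_apply,
    EuclideanSpace.inner_single_right, conj_trivial, one_mul]
  have hpdsQ : pds (pds Q) (‖x‖, ⟪x, y⟫ / ‖y‖) = pds (pds Q) (‖x‖, ⟪x, y⟫ / ‖y‖) := rfl
  field_simp
  ring
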